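/- Define q_n(−2a) = (1/π) ∫_{−2}^{2} U_n(u/2) √(1 − u²/4)/(−2a − u) du for real a with |a| ≥ 1, where U_n is the Chebyshev polynomial of the second kind. Then q_n(−2a) = −(ω(a) U_n(−a) + U_{n−1}(−a)), where ω(a) = a − sgn(a)√(a² − 1) and U_{−1} = 0. -/

import Mathlib

/-!
After `u = 2t` the integral is `-Jₙ(a)` with `Jₙ(a) = ∫₋₁¹ Uₙ(t) √(1 - t²) / (a + t) dt`.
Writing `2t = 2(a + t) - 2a` in `Uₙ₊₂ = 2t Uₙ₊₁ - Uₙ` gives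
`Jₙ₊₂ = 2 ∫₋₁¹ Uₙ₊₁(t) √(1 - t²) dt - 2a Jₙ₊₁ - Jₙ`, and the remaining integral vanishes by
orthogonality of the `Uₘ` for the semicircle weight (under `t = cos θ` it is
`∫₀^π sin((m + 1)θ) sin θ dθ`). So `Jₙ` and `π (ω(a) Uₙ(-a) + Uₙ₋₁(-a))` obey the same recurrence
in `n`, and it remains to compute `J₀(a) = π ω(a)`: for `a ≥ 1` from the primitive
`a arcsin t + √(1 - t²) - √(a² - 1) arcsin ((1 + a t) / (a + t))`, and for `a ≤ -1` by `t ↦ -t`.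
-/

/-- `ω(a) = a - sgn(a)·√(a² - 1)`. -/
noncomputable def omegaFn (a : ℝ) : ℝ := a - Real.sign a * Real.sqrt (a ^ 2 - 1)

open Real Polynomial intervalIntegral MeasureTheory Set

theorem integral_cos_nat_mul_eq_zero {k : ℕ} (hk : k ≠ 0) :
    ∫ θ in (0:ℝ)..π, cos (k * θ) = 0 := by
  rw [integral_comp_mul_left (fun θ => cos θ) (Nat.cast_ne_zero.mpr hk), integral_cos,
    sin_nat_mul_pi]
  simp

theorem integral_eq_integral_comp_cos_mul_sin {g : ℝ → ℝ} (hg : Continuous g) :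
    ∫ t in (-1:ℝ)..1, g t = ∫ θ in (0:ℝ)..π, g (cos θ) * sin θ := by
  have h := integral_comp_mul_deriv (a := 0) (b := π) (fun θ _ => hasDerivAt_cos θ)
    continuousOn_sin.neg hg
  rw [cos_zero, cos_pi, integral_symm (-1) 1] at h
  simpa [Function.comp_apply, mul_neg, intervalIntegral.integral_neg] using h.symm

theorem integral_chebyshevU_mul_sqrt_one_sub_sq {m : ℕ} (hm : m ≠ 0) :
    ∫ t in (-1:ℝ)..1, (Chebyshev.U ℝ m).eval t * √(1 - t ^ 2) = 0 := by
  rw [integral_eq_integral_comp_cos_mul_sin (by fun_prop)]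
  have hprod : ∀ θ ∈ uIcc 0 π, (Chebyshev.U ℝ m).eval (cos θ) * √(1 - cos θ ^ 2) * sin θ =
      (cos (m * θ) - cos ((m + 2 : ℕ) * θ)) / 2 := by
    intro θ hθ
    rw [uIcc_of_le pi_pos.le] at hθ
    rw [← sin_sq, sqrt_sq (sin_nonneg_of_nonneg_of_le_pi hθ.1 hθ.2), Chebyshev.U_real_cos,
      eq_div_iff two_ne_zero, mul_comm, ← mul_assoc, two_mul_sin_mul_sin]
    push_cast; ring_nf
  rw [integral_congr hprod, intervalIntegral.integral_div,
    intervalIntegral.integral_sub (by apply Continuous.intervalIntegrable; fun_prop)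
      (by apply Continuous.intervalIntegrable; fun_prop),
    integral_cos_nat_mul_eq_zero hm, integral_cos_nat_mul_eq_zero (by omega)]
  simp

theorem hasDerivAt_sqrt_sq_sub_one_mul_arcsin {a t : ℝ} (ha : 1 ≤ a) (ht : t ∈ Ioo (-1) 1) :
    HasDerivAt (fun t => √(a ^ 2 - 1) * arcsin ((1 + a * t) / (a + t)))
      ((a ^ 2 - 1) / (√(1 - t ^ 2) * (a + t))) t := by
  rcases ha.eq_or_lt with rfl | ha
  · simpa using hasDerivAt_const t (0 : ℝ)
  obtain ⟨ht₁, ht₂⟩ := ht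
  have hat : 0 < a + t := by linarith
  have hs₁ : 0 < √(1 - t ^ 2) := sqrt_pos.mpr (by nlinarith)
  have hs₂ : 0 < √(a ^ 2 - 1) := sqrt_pos.mpr (by nlinarith)
  have hsq₁ : √(1 - t ^ 2) ^ 2 = 1 - t ^ 2 := sq_sqrt (by nlinarith)
  have hsq₂ : √(a ^ 2 - 1) ^ 2 = a ^ 2 - 1 := sq_sqrt (by nlinarith)
  set g : ℝ → ℝ := fun t => (1 + a * t) / (a + t)
  have h1g : 1 - g t ^ 2 = (√(a ^ 2 - 1) * √(1 - t ^ 2) / (a + t)) ^ 2 := by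
    rw [div_pow (√(a ^ 2 - 1) * √(1 - t ^ 2)), mul_pow, hsq₁, hsq₂]
    simp only [g]
    field_simp
    ring
  have hg : 0 < 1 - g t ^ 2 := by rw [h1g]; positivity
  have hg' : HasDerivAt g ((a ^ 2 - 1) / (a + t) ^ 2) t := by
    refine (((hasDerivAt_id t).const_mul a |>.const_add 1).div
      ((hasDerivAt_id t).const_add a) hat.ne').congr_deriv ?_
    simp only [id]
    ring
  refine (((hasDerivAt_arcsin (by nlinarith) (by nlinarith)).comp t hg').const_mul
    √(a ^ 2 - 1)).congr_deriv ?_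
  rw [h1g, sqrt_sq (by positivity)]
  field_simp

noncomputable def sqrtDivAddPrimitive (a t : ℝ) : ℝ :=
  a * arcsin t + √(1 - t ^ 2) - √(a ^ 2 - 1) * arcsin ((1 + a * t) / (a + t))

theorem hasDerivAt_sqrtDivAddPrimitive {a t : ℝ} (ha : 1 ≤ a) (ht : t ∈ Ioo (-1) 1) :
    HasDerivAt (sqrtDivAddPrimitive a) (√(1 - t ^ 2) / (a + t)) t := by
  obtain ⟨ht₁, ht₂⟩ := ht
  have hat : 0 < a + t := by linarith
  have h1t : 0 < 1 - t ^ 2 := by nlinarith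
  have hsq : √(1 - t ^ 2) ^ 2 = 1 - t ^ 2 := sq_sqrt h1t.le
  have hsqrt : HasDerivAt (fun t => √(1 - t ^ 2)) (-(2 * t) / (2 * √(1 - t ^ 2))) t :=
    ((hasDerivAt_pow 2 t).const_sub 1 |>.sqrt h1t.ne').congr_deriv (by ring)
  refine ((((hasDerivAt_arcsin ht₁.ne' ht₂.ne).const_mul a).add hsqrt).sub
    (hasDerivAt_sqrt_sq_sub_one_mul_arcsin ha ⟨ht₁, ht₂⟩)).congr_deriv ?_
  field_simp
  linear_combination -hsq

theorem continuousOn_sqrtDivAddPrimitive {a : ℝ} (ha : 1 ≤ a) :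
    ContinuousOn (sqrtDivAddPrimitive a) (Icc (-1) 1) := by
  refine (by fun_prop : Continuous fun t => a * arcsin t + √(1 - t ^ 2)).continuousOn.sub ?_
  rcases ha.eq_or_lt with rfl | ha
  · simpa using continuousOn_const
  refine continuousOn_const.mul (continuous_arcsin.comp_continuousOn
    (ContinuousOn.div (by fun_prop) (by fun_prop) fun t ht => ?_))
  linarith [ht.1]

theorem sqrtDivAddPrimitive_one_sub_neg_one {a : ℝ} (ha : 1 ≤ a) :
    sqrtDivAddPrimitive a 1 - sqrtDivAddPrimitive a (-1) = π * (a - √(a ^ 2 - 1)) := by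
  have hright : (1 + a * 1) / (a + 1) = 1 := by
    rw [mul_one, add_comm, div_self (by linarith)]
  -- for `a = 1` the value at `-1` is the junk `arcsin (0 / 0)`, but its coefficient vanishes
  have hleft : √(a ^ 2 - 1) * arcsin ((1 + a * -1) / (a + -1)) = -(√(a ^ 2 - 1) * (π / 2)) := by
    rcases ha.eq_or_lt with rfl | ha
    · simp
    rw [show (1 + a * -1) / (a + -1) = -1 by field_simp [show a + -1 ≠ 0 by linarith]; ring,
      arcsin_neg_one, mul_neg]
  simp only [sqrtDivAddPrimitive, hright, hleft, arcsin_one, arcsin_neg_one]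
  norm_num
  ring

theorem intervalIntegrable_sqrt_div_add_of_one_le {a : ℝ} (ha : 1 ≤ a) :
    IntervalIntegrable (fun t => √(1 - t ^ 2) / (a + t)) volume (-1) 1 := by
  refine (intervalIntegrable_iff_integrableOn_Ioc_of_le (by norm_num)).mpr
    (integrableOn_deriv_of_nonneg (continuousOn_sqrtDivAddPrimitive ha)
      (fun t ht => hasDerivAt_sqrtDivAddPrimitive ha ht) fun t ht => ?_)
  exact div_nonneg (sqrt_nonneg _) (by linarith [ht.1])

theorem integral_sqrt_div_add_of_one_le {a : ℝ} (ha : 1 ≤ a) :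
    ∫ t in (-1 : ℝ)..1, √(1 - t ^ 2) / (a + t) = π * (a - √(a ^ 2 - 1)) := by
  rw [integral_eq_sub_of_hasDerivAt_of_le (by norm_num) (continuousOn_sqrtDivAddPrimitive ha)
    (fun t ht => hasDerivAt_sqrtDivAddPrimitive ha ht) (intervalIntegrable_sqrt_div_add_of_one_le ha),
    sqrtDivAddPrimitive_one_sub_neg_one ha]

theorem sqrt_div_neg_add (a t : ℝ) :
    √(1 - t ^ 2) / (-a + t) = -(√(1 - (-t) ^ 2) / (a + -t)) := by
  rw [neg_sq, ← div_neg, neg_add, neg_neg]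

theorem intervalIntegrable_sqrt_div_add {a : ℝ} (ha : 1 ≤ |a|) :
    IntervalIntegrable (fun t => √(1 - t ^ 2) / (a + t)) volume (-1) 1 := by
  rcases le_abs'.mp ha with ha | ha
  · obtain ⟨b, hb, rfl⟩ : ∃ b, 1 ≤ b ∧ a = -b := ⟨-a, by linarith, by ring⟩
    simp_rw [sqrt_div_neg_add b]
    refine IntervalIntegrable.neg (f := fun t => √(1 - (-t) ^ 2) / (b + -t)) ?_
    simpa using ((IntervalIntegrable.iff_comp_neg).mp
      (intervalIntegrable_sqrt_div_add_of_one_le hb)).symm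
  · exact intervalIntegrable_sqrt_div_add_of_one_le ha

theorem omegaFn_neg (a : ℝ) : omegaFn (-a) = -omegaFn a := by
  simp only [omegaFn, Real.sign_neg, neg_sq]
  ring

theorem integral_sqrt_div_add {a : ℝ} (ha : 1 ≤ |a|) :
    ∫ t in (-1 : ℝ)..1, √(1 - t ^ 2) / (a + t) = π * omegaFn a := by
  have hω {b : ℝ} (hb : 1 ≤ b) : omegaFn b = b - √(b ^ 2 - 1) := by
    rw [omegaFn, Real.sign_of_pos (by linarith), one_mul]
  rcases le_abs'.mp ha with ha | ha
  · obtain ⟨b, hb, rfl⟩ : ∃ b, 1 ≤ b ∧ a = -b := ⟨-a, by linarith, by ring⟩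
    simp_rw [sqrt_div_neg_add b]
    rw [intervalIntegral.integral_neg, intervalIntegral.integral_comp_neg
      (fun t => √(1 - t ^ 2) / (b + t)), neg_neg, integral_sqrt_div_add_of_one_le hb, omegaFn_neg,
      hω hb, mul_neg]
  · rw [integral_sqrt_div_add_of_one_le ha, hω ha]

/-- `t = -a` is the only pole, and there `√(1 - t²)` vanishes since `1 ≤ |a|`. -/
theorem add_mul_sqrt_div_add {a : ℝ} (ha : 1 ≤ |a|) (t : ℝ) :
    (a + t) * (√(1 - t ^ 2) / (a + t)) = √(1 - t ^ 2) := by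
  rcases eq_or_ne (a + t) 0 with h | h
  · have : 1 - t ^ 2 ≤ 0 := by
      rw [show t = -a by linarith, neg_sq, ← sq_abs]
      nlinarith
    simp [sqrt_eq_zero_of_nonpos this]
  · exact mul_div_cancel₀ _ h

noncomputable def chebyshevUStieltjes (a : ℝ) (n : ℤ) : ℝ :=
  ∫ t in (-1:ℝ)..1, (Chebyshev.U ℝ n).eval t * (√(1 - t ^ 2) / (a + t))

theorem chebyshevUStieltjes_add_two {a : ℝ} (ha : 1 ≤ |a|) (n : ℤ) :
    chebyshevUStieltjes a (n + 2) =
      2 * (∫ t in (-1:ℝ)..1, (Chebyshev.U ℝ (n + 1)).eval t * √(1 - t ^ 2))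
        - 2 * a * chebyshevUStieltjes a (n + 1) - chebyshevUStieltjes a n := by
  have hint (m : ℤ) : IntervalIntegrable
      (fun t => (Chebyshev.U ℝ m).eval t * (√(1 - t ^ 2) / (a + t))) volume (-1) 1 :=
    (intervalIntegrable_sqrt_div_add ha).continuousOn_mul (Polynomial.continuousOn _)
  have hsqrt : IntervalIntegrable
      (fun t => (Chebyshev.U ℝ (n + 1)).eval t * √(1 - t ^ 2)) volume (-1) 1 :=
    Continuous.intervalIntegrable (by fun_prop) _ _
  have hrec (t : ℝ) : (Chebyshev.U ℝ (n + 2)).eval t * (√(1 - t ^ 2) / (a + t)) =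
      2 * ((Chebyshev.U ℝ (n + 1)).eval t * √(1 - t ^ 2))
        - 2 * a * ((Chebyshev.U ℝ (n + 1)).eval t * (√(1 - t ^ 2) / (a + t)))
        - (Chebyshev.U ℝ n).eval t * (√(1 - t ^ 2) / (a + t)) := by
    rw [Chebyshev.U_add_two]
    simp only [eval_sub, eval_mul, eval_ofNat, eval_X]
    linear_combination 2 * (Chebyshev.U ℝ (n + 1)).eval t * add_mul_sqrt_div_add ha t
  simp only [chebyshevUStieltjes, hrec]
  rw [integral_sub ((hsqrt.const_mul 2).sub ((hint _).const_mul _)) (hint n),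
    integral_sub (hsqrt.const_mul 2) ((hint _).const_mul _), intervalIntegral.integral_const_mul,
    intervalIntegral.integral_const_mul]

theorem chebyshevUStieltjes_natCast {a : ℝ} (ha : 1 ≤ |a|) (n : ℕ) :
    chebyshevUStieltjes a n =
      π * (omegaFn a * (Chebyshev.U ℝ n).eval (-a) + (Chebyshev.U ℝ ((n : ℤ) - 1)).eval (-a)) := by
  have hU (m : ℤ) : (Chebyshev.U ℝ (m + 2)).eval (-a) =
      -2 * a * (Chebyshev.U ℝ (m + 1)).eval (-a) - (Chebyshev.U ℝ m).eval (-a) := by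
    simp [Chebyshev.U_add_two]
  have h0 : chebyshevUStieltjes a 0 = π * omegaFn a := by
    simpa [chebyshevUStieltjes] using integral_sqrt_div_add ha
  induction n using Nat.twoStepInduction with
  | zero => simpa using h0
  | one =>
    have hneg : chebyshevUStieltjes a (-1) = 0 := by simp [chebyshevUStieltjes]
    rw [show ((1 : ℕ) : ℤ) = -1 + 2 by norm_num, chebyshevUStieltjes_add_two ha,
      show (-1 : ℤ) + 1 = 0 by norm_num, h0, hneg]
    norm_num [integral_sqrt_one_sub_sq]
    ring
  | more n ih₀ ih₁ =>
    have h := chebyshevUStieltjes_add_two ha n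
    have hK := integral_chebyshevU_mul_sqrt_one_sub_sq (m := n + 1) (by omega)
    have e₁ := hU (n - 1)
    rw [show (n : ℤ) - 1 + 2 = n + 1 by ring, show (n : ℤ) - 1 + 1 = n by ring] at e₁
    push_cast at hK ih₁ ⊢
    rw [h, hK, ih₀, ih₁, show (n : ℤ) + 2 - 1 = n + 1 by ring, show (n : ℤ) + 1 - 1 = n by ring]
    linear_combination (-π * omegaFn a) * hU n + (-π) * e₁

open Polynomial in
/-- The associated function `q_n(-2a)` of the Chebyshev polynomials of the second kind. -/
theorem qFn_chebyshev_eval (a : ℝ) (ha : 1 ≤ |a|) (n : ℕ) :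
    (1 / Real.pi) *
        ∫ u in (-2 : ℝ)..2,
          (Chebyshev.U ℝ n).eval (u / 2) * Real.sqrt (1 - u ^ 2 / 4) / (-2 * a - u) =
      -(omegaFn a * (Chebyshev.U ℝ n).eval (-a) +
          (Chebyshev.U ℝ ((n : ℤ) - 1)).eval (-a)) := by
  have hscale (t : ℝ) : (Chebyshev.U ℝ n).eval (2 * t / 2) * √(1 - (2 * t) ^ 2 / 4) / (-2 * a - 2 * t)
      = -((Chebyshev.U ℝ n).eval t * (√(1 - t ^ 2) / (a + t))) / 2 := by
    rw [show -2 * a - 2 * t = -((a + t) * 2) by ring, div_neg, ← div_div]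
    ring_nf
  have hint : ∫ u in (-2 : ℝ)..2,
      (Chebyshev.U ℝ n).eval (u / 2) * √(1 - u ^ 2 / 4) / (-2 * a - u) = -chebyshevUStieltjes a n := by
    have h := integral_comp_mul_left (a := -1) (b := 1)
      (fun u => (Chebyshev.U ℝ n).eval (u / 2) * √(1 - u ^ 2 / 4) / (-2 * a - u)) two_ne_zero
    rw [show (2 : ℝ) * -1 = -2 by norm_num, mul_one, smul_eq_mul] at h
    simp only [hscale, intervalIntegral.integral_div, intervalIntegral.integral_neg] at h
    rw [chebyshevUStieltjes]
    linarith
  rw [hint, chebyshevUStieltjes_natCast ha]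
  field_simp
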